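/- arXiv:1010.1717 — 3 statements merged into one kernel-verified Lean document; each statement's English description precedes it below -/
import Mathlib

section
/- There do not exist integers a₁, a₂ with a₁ ≠ 2 and a₂ ≠ 2, and nonnegative integers ℓ₁, ℓ₂, such that the matrix product [[0,-1],[1,a₁]] · [[0,-1],[1,2]]^ℓ₁ · [[0,-1],[1,a₂]] · [[0,-1],[1,2]]^ℓ₂ equals the identity matrix. -/
lemma pow_lem (n : ℕ) : (!![0, -1; 1, 2] : Matrix (Fin 2) (Fin 2) ℤ) ^ n
    = !![1 - (n : ℤ), -(n : ℤ); (n : ℤ), (n : ℤ) + 1] := by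
  induction n with
  | zero => simp [Matrix.one_fin_two]
  | succ n ih =>
      rw [pow_succ, ih, Matrix.mul_fin_two]
      push_cast
      congr 1 <;> ring

/-- The equation coming from composing basis-change matrices around a complete smooth
toric fan on ℝ² in which all but two rays correspond to (-2)-curves has no solutions. -/
theorem stmt_0 :
    ¬ ∃ (a₁ a₂ : ℤ) (ℓ₁ ℓ₂ : ℕ), a₁ ≠ 2 ∧ a₂ ≠ 2 ∧
      (!![0, -1; 1, a₁] : Matrix (Fin 2) (Fin 2) ℤ) *
        (!![0, -1; 1, 2] : Matrix (Fin 2) (Fin 2) ℤ) ^ ℓ₁ *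
        (!![0, -1; 1, a₂] : Matrix (Fin 2) (Fin 2) ℤ) *
        (!![0, -1; 1, 2] : Matrix (Fin 2) (Fin 2) ℤ) ^ ℓ₂ = 1 := by
  rintro ⟨a₁, a₂, ℓ₁, ℓ₂, ha₁, ha₂, h⟩
  rw [pow_lem, pow_lem, Matrix.mul_fin_two, Matrix.mul_fin_two, Matrix.mul_fin_two] at h
  rw [← Matrix.ext_iff] at h
  simp [Fin.forall_fin_two, Matrix.one_fin_two] at h
  obtain ⟨⟨h00, h01⟩, h10, h11⟩ := h
  have key : (2 - a₂) * ((ℓ₁ : ℤ) + 1) = 0 := by linear_combination h01 - h00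
  rcases mul_eq_zero.1 key with h | h
  · omega
  · have : (0 : ℤ) ≤ (ℓ₁ : ℤ) := Int.natCast_nonneg _
    omega
end

section
/- Let L be the free abelian group on generators D₃, D₄, D₅, D₆, D₇, D₈, and let Δ be the subgroup generated by D₃, D₅, D₆, D₇, and D₁ := 2·(D₈ - D₄) + D₃ + D₅ + D₇. Then the quotient L/Δ has a nonzero torsion element; in particular the inclusion Δ ↪ L does not split. -/
/-- Auxiliary linear functional `v ↦ v 5 - v 1` into `ZMod 4`. -/
def phi4 : (Fin 6 → ℤ) →ₗ[ℤ] ZMod 4 where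
  toFun v := ((v 5 - v 1 : ℤ) : ZMod 4)
  map_add' v w := by simp only [Pi.add_apply]; push_cast; ring
  map_smul' m v := by
    simp only [Pi.smul_apply, smul_eq_mul, RingHom.id_apply, zsmul_eq_mul]
    push_cast
    ring

/-- With L free abelian on D₃,...,D₈ (indexed 0,...,5) and Δ the subgroup generated by
D₃, D₅, D₆, D₇ and D₁ = 2(D₈ - D₄) + D₃ + D₅ + D₇, the quotient L/Δ has a nonzero
torsion element; in particular the inclusion Δ ↪ L does not split. -/
theorem stmt_5 :
    let e : Fin 6 → (Fin 6 → ℤ) := fun i => Pi.single i 1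
    let Δ : Submodule ℤ (Fin 6 → ℤ) :=
      Submodule.span ℤ {e 0, e 2, e 3, e 4, (2 : ℤ) • (e 5 - e 1) + e 0 + e 2 + e 4}
    (∃ x : (Fin 6 → ℤ) ⧸ Δ, x ≠ 0 ∧ ∃ m : ℤ, m ≠ 0 ∧ m • x = 0) ∧
    ¬ ∃ Q : Submodule ℤ (Fin 6 → ℤ), IsCompl Δ Q := by
  intro e Δ
  -- Δ is contained in the kernel of phi4
  have hker : Δ ≤ LinearMap.ker phi4 := by
    rw [Submodule.span_le]
    intro v hv
    simp only [Set.mem_insert_iff, Set.mem_singleton_iff] at hv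
    rcases hv with h | h | h | h | h <;> subst h <;>
      simp [phi4, e, Pi.single_apply] <;> decide
  have hnotmem : e 5 - e 1 ∉ Δ := by
    intro hmem
    have := hker hmem
    rw [LinearMap.mem_ker] at this
    simp [phi4, e, Pi.single_apply] at this
    exact absurd this (by decide)
  -- 2 • (e 5 - e 1) ∈ Δ
  have hmem2 : (2 : ℤ) • (e 5 - e 1) ∈ Δ := by
    have h0 : e 0 ∈ Δ := Submodule.subset_span (by simp)
    have h2 : e 2 ∈ Δ := Submodule.subset_span (by simp)
    have h4 : e 4 ∈ Δ := Submodule.subset_span (by simp)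
    have hg : (2 : ℤ) • (e 5 - e 1) + e 0 + e 2 + e 4 ∈ Δ :=
      Submodule.subset_span (by simp)
    have hm : ((2 : ℤ) • (e 5 - e 1) + e 0 + e 2 + e 4) - e 0 - e 2 - e 4 ∈ Δ :=
      Submodule.sub_mem _ (Submodule.sub_mem _ (Submodule.sub_mem _ hg h0) h2) h4
    have heq : (2 : ℤ) • (e 5 - e 1)
        = ((2 : ℤ) • (e 5 - e 1) + e 0 + e 2 + e 4) - e 0 - e 2 - e 4 := by abel
    rw [heq]; exact hm
  set x : (Fin 6 → ℤ) ⧸ Δ := Submodule.Quotient.mk (e 5 - e 1) with hx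
  have hx0 : x ≠ 0 := by
    intro h
    exact hnotmem ((Submodule.Quotient.mk_eq_zero Δ).mp h)
  have hx2 : (2 : ℤ) • x = 0 := by
    rw [hx, ← Submodule.Quotient.mk_smul, Submodule.Quotient.mk_eq_zero]
    exact hmem2
  refine ⟨⟨x, hx0, 2, by norm_num, hx2⟩, ?_⟩
  rintro ⟨Q, hQ⟩
  have equiv := Submodule.quotientEquivOfIsCompl Δ Q hQ
  have hy : (2 : ℤ) • equiv x = 0 := by
    rw [← map_smul, hx2, map_zero]
  rcases smul_eq_zero.mp hy with h | h
  · norm_num at h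
  · exact hx0 (equiv.injective (by rw [h, map_zero]))
end

section
/- In the free abelian group ℤ⁶ with basis e₃,...,e₈, setting d₁ := 2·(e₈ - e₄) + e₃ + e₅ + e₇, the element e₈ - e₄ is not in the subgroup Δ generated by {e₃, e₅, e₆, e₇, d₁}, but 2·(e₈ - e₄) is in Δ. -/
/-- In ℤ⁶ with basis e₃,...,e₈ (indexed 0,...,5), setting d₁ = 2(e₈-e₄)+e₃+e₅+e₇,
the element e₈ - e₄ is not in Δ = span{e₃,e₅,e₆,e₇,d₁}, but 2(e₈-e₄) is in Δ. -/
theorem stmt_6 :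
    let e : Fin 6 → (Fin 6 → ℤ) := fun i => Pi.single i 1
    let Δ : Submodule ℤ (Fin 6 → ℤ) :=
      Submodule.span ℤ {e 0, e 2, e 3, e 4, (2 : ℤ) • (e 5 - e 1) + e 0 + e 2 + e 4}
    (e 5 - e 1) ∉ Δ ∧ (2 : ℤ) • (e 5 - e 1) ∈ Δ := by
  intro e Δ
  constructor
  · intro h
    have key : ∀ x ∈ Δ, (2 : ℤ) ∣ x 5 := by
      intro x hx
      refine Submodule.span_induction ?_ ?_ ?_ ?_ hx
      · intro y hy
        simp only [Set.mem_insert_iff, Set.mem_singleton_iff] at hy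
        rcases hy with rfl | rfl | rfl | rfl | rfl <;>
          simp [e, Pi.single_apply]
      · simp
      · intro a b _ _ ha hb
        simpa using dvd_add ha hb
      · intro c a _ ha
        exact Dvd.dvd.mul_left ha c
    have := key _ h
    simp [e, Pi.single_apply] at this
  · have hd : ((2 : ℤ) • (e 5 - e 1) + e 0 + e 2 + e 4) ∈ Δ :=
      Submodule.subset_span (by simp)
    have h0 : e 0 ∈ Δ := Submodule.subset_span (by simp)
    have h2 : e 2 ∈ Δ := Submodule.subset_span (by simp)
    have h4 : e 4 ∈ Δ := Submodule.subset_span (by simp)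
    have : (2 : ℤ) • (e 5 - e 1) =
        ((2 : ℤ) • (e 5 - e 1) + e 0 + e 2 + e 4) - e 0 - e 2 - e 4 := by abel
    rw [this]
    exact Submodule.sub_mem _ (Submodule.sub_mem _ (Submodule.sub_mem _ hd h0) h2) h4
end
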